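/- For any smooth vector field β_i on ℝ³, the tensor L_kij := ∂_k ∂_(i β_j) − ∂^l ∂_[l β_i] δ_jk − ∂^l ∂_[l β_j] δ_ik satisfies the f-constraint identically: ∂^k(∂^l L_klj − ∂_j L_kl^l) = 0. -/

import Mathlib

open scoped BigOperators

/-- Partial derivative in the `i`-th spatial coordinate direction on `ℝ³`. -/
noncomputable def pd (i : Fin 3) (u : (Fin 3 → ℝ) → ℝ) : (Fin 3 → ℝ) → ℝ :=
  fun x => fderiv ℝ u x (Pi.single i 1)

/-- Kronecker delta. -/
def kd (i j : Fin 3) : ℝ := if i = j then 1 else 0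

lemma pd_contDiff {u : (Fin 3 → ℝ) → ℝ} (h : ContDiff ℝ (⊤ : ℕ∞) u) (i : Fin 3) :
    ContDiff ℝ (⊤ : ℕ∞) (pd i u) :=
  (h.fderiv_right (by simp)).clm_apply contDiff_const

lemma pd_add {u v : (Fin 3 → ℝ) → ℝ} (hu : Differentiable ℝ u) (hv : Differentiable ℝ v)
    (i : Fin 3) : pd i (fun x => u x + v x) = fun x => pd i u x + pd i v x := by
  funext x; simp [pd, fderiv_fun_add (hu x) (hv x)]

lemma pd_sub {u v : (Fin 3 → ℝ) → ℝ} (hu : Differentiable ℝ u) (hv : Differentiable ℝ v)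
    (i : Fin 3) : pd i (fun x => u x - v x) = fun x => pd i u x - pd i v x := by
  funext x; simp [pd, fderiv_fun_sub (hu x) (hv x)]

lemma pd_const_mul {u : (Fin 3 → ℝ) → ℝ} (hu : Differentiable ℝ u) (c : ℝ)
    (i : Fin 3) : pd i (fun x => c * u x) = fun x => c * pd i u x := by
  funext x; rw [pd, fderiv_const_mul (hu x) c]; simp only [ContinuousLinearMap.smul_apply, smul_eq_mul, pd]

lemma pd_mul_const {u : (Fin 3 → ℝ) → ℝ} (hu : Differentiable ℝ u) (c : ℝ)
    (i : Fin 3) : pd i (fun x => u x * c) = fun x => pd i u x * c := by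
  funext x; rw [pd, fderiv_mul_const (hu x) c]
  simp only [ContinuousLinearMap.smul_apply, smul_eq_mul, pd]; ring

lemma pd_sum {ι : Type*} (s : Finset ι) {f : ι → (Fin 3 → ℝ) → ℝ}
    (hf : ∀ l ∈ s, Differentiable ℝ (f l)) (i : Fin 3) :
    pd i (fun x => ∑ l ∈ s, f l x) = fun x => ∑ l ∈ s, pd i (f l) x := by
  funext x
  simp only [pd]
  rw [fderiv_fun_sum (fun l hl => (hf l hl) x)]
  simp

lemma pd_comm {u : (Fin 3 → ℝ) → ℝ} (h : ContDiff ℝ (⊤ : ℕ∞) u) (i j : Fin 3) :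
    pd i (pd j u) = pd j (pd i u) := by
  funext x
  have hd : Differentiable ℝ (fderiv ℝ u) :=
    (h.fderiv_right (m := 1) (WithTop.coe_le_coe.mpr le_top)).differentiable one_ne_zero
  have key : ∀ (a b : Fin 3),
      pd a (pd b u) x = fderiv ℝ (fderiv ℝ u) x (Pi.single a 1) (Pi.single b 1) := by
    intro a b
    have h1 : pd b u = fun y => (fderiv ℝ u y) (Pi.single b 1) := rfl
    rw [pd, h1, fderiv_clm_apply (hd x) (differentiableAt_const _)]
    simp
  rw [key i j, key j i]
  exact (h.contDiffAt.isSymmSndFDerivAt (by simp only [minSmoothness_of_isRCLikeNormedField]; exact WithTop.coe_le_coe.mpr le_top)) _ _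

lemma kd_sum (f : Fin 3 → ℝ) (k : Fin 3) : ∑ l, f l * kd l k = f k := by
  simp [kd, mul_ite]

/-- `L_kij := ∂_k ∂_(i β_j) − ∂^l ∂_[l β_i] δ_jk − ∂^l ∂_[l β_j] δ_ik` for a vector
field `β` on `ℝ³`. -/
noncomputable def Lsh (β : Fin 3 → (Fin 3 → ℝ) → ℝ) (k i j : Fin 3)
    (x : Fin 3 → ℝ) : ℝ :=
  (1 / 2) * (pd k (pd i (β j)) x + pd k (pd j (β i)) x)
  - ((1 / 2) * ∑ l, (pd l (pd l (β i)) x - pd l (pd i (β l)) x)) * kd j k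
  - ((1 / 2) * ∑ l, (pd l (pd l (β j)) x - pd l (pd j (β l)) x)) * kd i k

/-- `Ef β i = ∂^l ∂_[l β_i]`. -/
noncomputable def Ef (β : Fin 3 → (Fin 3 → ℝ) → ℝ) (i : Fin 3) : (Fin 3 → ℝ) → ℝ :=
  fun z => (1 / 2) * ∑ l, (pd l (pd l (β i)) z - pd l (pd i (β l)) z)

section Push
variable {β : Fin 3 → (Fin 3 → ℝ) → ℝ} (hβ : ∀ i, ContDiff ℝ (⊤ : ℕ∞) (β i))
include hβ

lemma sβ2 (a b c : Fin 3) : ContDiff ℝ (⊤ : ℕ∞) (pd a (pd b (β c))) :=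
  pd_contDiff (pd_contDiff (hβ c) b) a

lemma sE (c : Fin 3) : ContDiff ℝ (⊤ : ℕ∞) (Ef β c) :=
  contDiff_const.mul (ContDiff.sum fun l _ => (sβ2 hβ l l c).sub (sβ2 hβ l c l))

omit hβ in
lemma Lsh_eq (k i j : Fin 3) : Lsh β k i j = fun z =>
    (1 / 2) * (pd k (pd i (β j)) z + pd k (pd j (β i)) z)
      - Ef β i z * kd j k - Ef β j z * kd i k := rfl

lemma pd_Lsh (l k i j : Fin 3) : pd l (Lsh β k i j) = fun y =>
    (1 / 2) * (pd l (pd k (pd i (β j))) y + pd l (pd k (pd j (β i))) y)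
      - pd l (Ef β i) y * kd j k - pd l (Ef β j) y * kd i k := by
  have d2 : ∀ a b c : Fin 3, Differentiable ℝ (pd a (pd b (β c))) :=
    fun a b c => (sβ2 hβ a b c).differentiable (by simp)
  have dE : ∀ c : Fin 3, Differentiable ℝ (Ef β c) :=
    fun c => (sE hβ c).differentiable (by simp)
  rw [Lsh_eq,
    pd_sub ((((contDiff_const.mul ((sβ2 hβ k i j).add (sβ2 hβ k j i))).sub
      ((sE hβ i).mul contDiff_const)).differentiable (by simp)))
      ((dE j).mul_const _),
    pd_sub ((contDiff_const.mul ((sβ2 hβ k i j).add (sβ2 hβ k j i))).differentiable (by simp))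
      ((dE i).mul_const _),
    pd_const_mul ((d2 k i j).fun_add (d2 k j i)),
    pd_add (d2 k i j) (d2 k j i),
    pd_mul_const (dE i), pd_mul_const (dE j)]

lemma sLsh (k i j : Fin 3) : ContDiff ℝ (⊤ : ℕ∞) (Lsh β k i j) := by
  rw [Lsh_eq]
  exact ((contDiff_const.mul ((sβ2 hβ k i j).add (sβ2 hβ k j i))).sub
    ((sE hβ i).mul contDiff_const)).sub ((sE hβ j).mul contDiff_const)

lemma pd_pd_Ef (a b c : Fin 3) : pd a (pd b (Ef β c)) = fun x =>
    (1 / 2) * ∑ m, (pd a (pd b (pd m (pd m (β c)))) x - pd a (pd b (pd m (pd c (β m))))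
      x) := by
  have d2 : ∀ a' b' c' : Fin 3, Differentiable ℝ (pd a' (pd b' (β c'))) :=
    fun a' b' c' => (sβ2 hβ a' b' c').differentiable (by simp)
  have d3 : ∀ p a' b' c' : Fin 3, Differentiable ℝ (pd p (pd a' (pd b' (β c')))) :=
    fun p a' b' c' => (pd_contDiff (sβ2 hβ a' b' c') p).differentiable (by simp)
  have h1 : pd b (Ef β c) = fun y =>
      (1 / 2) * ∑ m, (pd b (pd m (pd m (β c))) y - pd b (pd m (pd c (β m))) y) := by
    rw [show Ef β c = fun z => (1 / 2) * ∑ l, (pd l (pd l (β c)) z - pd l (pd c (β l)) z) from rfl,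
      pd_const_mul (Differentiable.fun_sum fun m _ => (d2 m m c).fun_sub (d2 m c m)),
      pd_sum Finset.univ (fun m _ => (d2 m m c).fun_sub (d2 m c m))]
    funext y
    congr 1
    refine Finset.sum_congr rfl fun m _ => ?_
    rw [pd_sub (d2 m m c) (d2 m c m)]
  rw [h1, pd_const_mul (Differentiable.fun_sum fun m _ => (d3 b m m c).fun_sub (d3 b m c m)),
    pd_sum Finset.univ (fun m _ => (d3 b m m c).fun_sub (d3 b m c m))]
  funext x
  congr 1
  refine Finset.sum_congr rfl fun m _ => ?_
  rw [pd_sub (d3 b m m c) (d3 b m c m)]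

lemma pd_pd_Lsh (m l k i j : Fin 3) : pd m (pd l (Lsh β k i j)) = fun x =>
    (1 / 2) * (pd m (pd l (pd k (pd i (β j)))) x + pd m (pd l (pd k (pd j (β i)))) x)
      - pd m (pd l (Ef β i)) x * kd j k - pd m (pd l (Ef β j)) x * kd i k := by
  have d3 : ∀ p a b c : Fin 3, Differentiable ℝ (pd p (pd a (pd b (β c)))) :=
    fun p a b c => (pd_contDiff (sβ2 hβ a b c) p).differentiable (by simp)
  have sE1 : ∀ p c : Fin 3, ContDiff ℝ (⊤ : ℕ∞) (pd p (Ef β c)) :=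
    fun p c => pd_contDiff (sE hβ c) p
  have dE1 : ∀ p c : Fin 3, Differentiable ℝ (pd p (Ef β c)) :=
    fun p c => (sE1 p c).differentiable (by simp)
  have s3 : ∀ p a b c : Fin 3, ContDiff ℝ (⊤ : ℕ∞) (pd p (pd a (pd b (β c)))) :=
    fun p a b c => pd_contDiff (sβ2 hβ a b c) p
  rw [pd_Lsh hβ,
    pd_sub (((contDiff_const.mul ((s3 l k i j).add (s3 l k j i))).sub
      ((sE1 l i).mul contDiff_const)).differentiable (by simp)) ((dE1 l j).mul_const _),
    pd_sub ((contDiff_const.mul ((s3 l k i j).add (s3 l k j i))).differentiable (by simp))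
      ((dE1 l i).mul_const _),
    pd_const_mul ((d3 l k i j).fun_add (d3 l k j i)),
    pd_add (d3 l k i j) (d3 l k j i),
    pd_mul_const (dE1 l i), pd_mul_const (dE1 l j)]

omit hβ in
lemma trace_Lsh (k : Fin 3) : (fun z => ∑ l, Lsh β k l l z)
    = fun z => (∑ l, pd k (pd l (β l)) z) - 2 * Ef β k z := by
  funext z
  simp only [Lsh_eq]
  have h1 : ∑ l, ((1 / 2) * (pd k (pd l (β l)) z + pd k (pd l (β l)) z)
      - Ef β l z * kd l k - Ef β l z * kd l k)
      = ∑ l, (pd k (pd l (β l)) z - 2 * (Ef β l z * kd l k)) :=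
    Finset.sum_congr rfl fun l _ => by ring
  rw [h1, Finset.sum_sub_distrib, ← Finset.mul_sum, kd_sum (fun l => Ef β l z) k]

lemma pd_pd_trace (n m k : Fin 3) : pd n (pd m (fun z => ∑ l, Lsh β k l l z))
    = fun x => (∑ l, pd n (pd m (pd k (pd l (β l))))
        x) - 2 * pd n (pd m (Ef β k)) x := by
  have d2 : ∀ a b c : Fin 3, Differentiable ℝ (pd a (pd b (β c))) :=
    fun a b c => (sβ2 hβ a b c).differentiable (by simp)
  have d3 : ∀ p a b c : Fin 3, Differentiable ℝ (pd p (pd a (pd b (β c)))) :=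
    fun p a b c => (pd_contDiff (sβ2 hβ a b c) p).differentiable (by simp)
  have h1 : pd m (fun z => ∑ l, Lsh β k l l z) = fun y =>
      (∑ l, pd m (pd k (pd l (β l))) y) - 2 * pd m (Ef β k) y := by
    rw [trace_Lsh,
      pd_sub (Differentiable.fun_sum fun l _ => d2 k l l)
        (((sE hβ k).differentiable (by simp)).const_mul 2),
      pd_sum Finset.univ (fun l _ => d2 k l l),
      pd_const_mul ((sE hβ k).differentiable (by simp))]
  rw [h1,
    pd_sub (Differentiable.fun_sum fun l _ => d3 m k l l)
      (((pd_contDiff (sE hβ k) m).differentiable (by simp)).const_mul 2),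
    pd_sum Finset.univ (fun l _ => d3 m k l l),
    pd_const_mul ((pd_contDiff (sE hβ k) m).differentiable (by simp))]

lemma swap23 (a b c d e : Fin 3) :
    pd a (pd b (pd c (pd d (β e)))) = pd a (pd c (pd b (pd d (β e)))) :=
  congrArg (pd a) (pd_comm (pd_contDiff (hβ e) d) b c)

lemma perm_front (a b c d e : Fin 3) :
    pd a (pd b (pd c (pd d (β e)))) = pd d (pd a (pd b (pd c (β e)))) := by
  rw [show pd c (pd d (β e)) = pd d (pd c (β e)) from pd_comm (hβ e) c d,
    show pd b (pd d (pd c (β e))) = pd d (pd b (pd c (β e))) from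
      pd_comm (pd_contDiff (hβ e) c) b d]
  exact pd_comm (pd_contDiff (pd_contDiff (hβ e) c) b) a d

lemma permT2 (k l d c : Fin 3) :
    pd k (pd l (pd k (pd d (β c)))) = pd d (pd k (pd k (pd l (β c)))) := by
  rw [perm_front hβ k l k d c]
  exact congrArg (pd d) (congrArg (pd k) (pd_comm (hβ c) l k))

lemma permT3 (k d l c : Fin 3) :
    pd k (pd d (pd k (pd l (β c)))) = pd d (pd k (pd k (pd l (β c)))) :=
  pd_comm (pd_contDiff (pd_contDiff (hβ c) l) k) k d

lemma rot3 (a b e : Fin 3) :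
    pd a (pd b (pd b (β e))) = pd b (pd b (pd a (β e))) := by
  rw [pd_comm (pd_contDiff (hβ e) b) a b]
  exact congrArg (pd b) (pd_comm (hβ e) a b)

lemma permV1 (k d m : Fin 3) :
    pd k (pd d (pd m (pd m (β k)))) = pd d (pd m (pd m (pd k (β k)))) := by
  rw [pd_comm (pd_contDiff (pd_contDiff (hβ k) m) m) k d]
  exact congrArg (pd d) (rot3 hβ k m k)

lemma permV2 (k d m : Fin 3) :
    pd k (pd d (pd m (pd k (β m)))) = pd d (pd k (pd k (pd m (β m)))) := by
  rw [pd_comm (pd_contDiff (pd_contDiff (hβ m) k) m) k d]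
  exact congrArg (pd d) (congrArg (pd k) (pd_comm (hβ m) m k))

end Push

/-- for any smooth vector field `β` on `ℝ³`, the tensor `L_kij` satisfies
the f-constraint identically: `∂^k(∂^l L_klj − ∂_j L_kl^l) = 0`. -/
theorem L_satisfies_f_constraint
    (β : Fin 3 → (Fin 3 → ℝ) → ℝ)
    (hβ_smooth : ∀ i, ContDiff ℝ (⊤ : ℕ∞) (β i)) :
    ∀ j x,
      (∑ k, pd k (fun y =>
        (∑ l, pd l (fun z => Lsh β k l j z) y)
          - pd j (fun z => ∑ l, Lsh β k l l z) y) x) = 0 := by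
  intro j x
  have hs := hβ_smooth
  have step : ∀ k, pd k (fun y =>
      (∑ l, pd l (fun z => Lsh β k l j z) y)
        - pd j (fun z => ∑ l, Lsh β k l l z) y) x
      = (∑ l, pd k (pd l (Lsh β k l j)) x)
        - ((∑ l, pd k (pd j (pd k (pd l (β l)))) x) - 2 * pd k (pd j (Ef β k)) x) := by
    intro k
    have strace : ContDiff ℝ (⊤ : ℕ∞) (fun z => ∑ l, Lsh β k l l z) :=
      ContDiff.sum fun l _ => sLsh hs k l l
    have hF : Differentiable ℝ (fun y => ∑ l, pd l (Lsh β k l j) y) :=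
      Differentiable.fun_sum fun l _ => (pd_contDiff (sLsh hs k l j) l).differentiable (by simp)
    have hG : Differentiable ℝ (pd j (fun z => ∑ l, Lsh β k l l z)) :=
      (pd_contDiff strace j).differentiable (by simp)
    rw [pd_sub hF hG,
      pd_sum Finset.univ (fun l _ => (pd_contDiff (sLsh hs k l j) l).differentiable (by simp)),
      pd_pd_trace hs k j k]
  have hdiv : ∀ k : Fin 3, (∑ l : Fin 3, pd k (pd l (Ef β l)) x) = 0 := by
    intro k
    have he : ∀ l : Fin 3, pd k (pd l (Ef β l)) x
        = 1 / 2 * ∑ m : Fin 3, (pd k (pd l (pd m (pd m (β l)))) x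
          - pd k (pd l (pd m (pd l (β m)))) x) :=
      fun l => congrFun (pd_pd_Ef hs k l l) x
    simp only [he]
    rw [← Finset.mul_sum]
    have hB : ∑ l : Fin 3, ∑ m : Fin 3, (pd k (pd l (pd m (pd m (β l)))) x
        - pd k (pd l (pd m (pd l (β m)))) x) = 0 := by
      have h1 : ∀ l m : Fin 3, pd k (pd l (pd m (pd l (β m)))) x
          = pd k (pd m (pd l (pd l (β m)))) x :=
        fun l m => congrFun (swap23 hs k l m l m) x
      rw [Finset.sum_congr rfl fun l (_ : l ∈ Finset.univ) =>
        Finset.sum_congr rfl fun m (_ : m ∈ Finset.univ) => by rw [h1 l m]]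
      simp only [Finset.sum_sub_distrib]
      exact sub_eq_zero_of_eq Finset.sum_comm
    rw [hB, mul_zero]
  have hk : ∀ k : Fin 3,
      (∑ l : Fin 3, (1 / 2 * (pd k (pd l (pd k (pd l (β j)))) x
          + pd k (pd l (pd k (pd j (β l)))) x)
        - pd k (pd l (Ef β l)) x * kd j k - pd k (pd l (Ef β j)) x * kd l k)
        - (∑ l : Fin 3, pd k (pd j (pd k (pd l (β l)))) x - 2 * pd k (pd j (Ef β k)) x))
      = (∑ l : Fin 3, pd j (pd l (pd l (pd k (β k)))) x)
        - ∑ l : Fin 3, pd j (pd k (pd k (pd l (β l)))) x := by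
    intro k
    have e1 : ∀ l : Fin 3, pd k (pd l (pd k (pd l (β j)))) x
        = pd k (pd k (pd l (pd l (β j)))) x :=
      fun l => congrFun (swap23 hs k l k l j) x
    have e2 : ∀ l : Fin 3, pd k (pd l (pd k (pd j (β l)))) x
        = pd j (pd k (pd k (pd l (β l)))) x :=
      fun l => congrFun (permT2 hs k l j l) x
    have e3 : ∀ l : Fin 3, pd k (pd j (pd k (pd l (β l)))) x
        = pd j (pd k (pd k (pd l (β l)))) x :=
      fun l => congrFun (permT3 hs k j l l) x
    have eEjj : pd k (pd k (Ef β j)) x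
        = 1 / 2 * ((∑ m : Fin 3, pd k (pd k (pd m (pd m (β j)))) x)
          - ∑ m : Fin 3, pd j (pd k (pd k (pd m (β m)))) x) := by
      rw [congrFun (pd_pd_Ef hs k k j) x]
      have h2 : ∀ m : Fin 3, pd k (pd k (pd m (pd j (β m)))) x
          = pd j (pd k (pd k (pd m (β m)))) x :=
        fun m => congrFun (perm_front hs k k m j m) x
      simp only [h2]
      rw [Finset.sum_sub_distrib]
    have eEjk : pd k (pd j (Ef β k)) x
        = 1 / 2 * ((∑ m : Fin 3, pd j (pd m (pd m (pd k (β k)))) x)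
          - ∑ m : Fin 3, pd j (pd k (pd k (pd m (β m)))) x) := by
      rw [congrFun (pd_pd_Ef hs k j k) x]
      have h1 : ∀ m : Fin 3, pd k (pd j (pd m (pd m (β k)))) x
          = pd j (pd m (pd m (pd k (β k)))) x :=
        fun m => congrFun (permV1 hs k j m) x
      have h2 : ∀ m : Fin 3, pd k (pd j (pd m (pd k (β m)))) x
          = pd j (pd k (pd k (pd m (β m)))) x :=
        fun m => congrFun (permV2 hs k j m) x
      simp only [h1, h2]
      rw [Finset.sum_sub_distrib]
    have hS : ∑ l : Fin 3, (1 / 2 * (pd k (pd l (pd k (pd l (β j)))) x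
          + pd k (pd l (pd k (pd j (β l)))) x)
        - pd k (pd l (Ef β l)) x * kd j k - pd k (pd l (Ef β j)) x * kd l k)
        = 1 / 2 * (∑ l : Fin 3, pd k (pd k (pd l (pd l (β j)))) x)
          + 1 / 2 * (∑ l : Fin 3, pd j (pd k (pd k (pd l (β l)))) x)
          - (∑ l : Fin 3, pd k (pd l (Ef β l)) x) * kd j k
          - pd k (pd k (Ef β j)) x := by
      have h0 : ∀ l : Fin 3, 1 / 2 * (pd k (pd l (pd k (pd l (β j)))) x
            + pd k (pd l (pd k (pd j (β l)))) x)
          - pd k (pd l (Ef β l)) x * kd j k - pd k (pd l (Ef β j)) x * kd l k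
          = (1 / 2 * pd k (pd k (pd l (pd l (β j)))) x
            + 1 / 2 * pd j (pd k (pd k (pd l (β l)))) x
            - pd k (pd l (Ef β l)) x * kd j k)
            - pd k (pd l (Ef β j)) x * kd l k :=
        fun l => by rw [e1 l, e2 l]; ring
      rw [Finset.sum_congr rfl fun l _ => h0 l, Finset.sum_sub_distrib,
        kd_sum (fun l => pd k (pd l (Ef β j)) x) k, Finset.sum_sub_distrib,
        Finset.sum_add_distrib, ← Finset.mul_sum, ← Finset.mul_sum, ← Finset.sum_mul]
    rw [hS, hdiv k, eEjj, eEjk,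
      Finset.sum_congr rfl fun l (_ : l ∈ Finset.univ) => e3 l]
    ring
  simp only [step, pd_pd_Lsh hs, hk]
  rw [Finset.sum_sub_distrib]
  exact sub_eq_zero_of_eq Finset.sum_comm
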